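/- For every integer m ≥ 3 there exist pairwise interior-disjoint nondegenerate closed axis-parallel rectangles Z₁, …, Zₘ in the plane ℝ² such that the complement ℝ² \ (Z₁ ∪ ⋯ ∪ Zₘ) has exactly m − 2 connected components. -/

import Mathlib

/-!
A ladder: two horizontal rails `[0, 2k+1] × [0, 1]` and `[0, 2k+1] × [2, 3]` joined by the `k + 1`
rungs `[2j, 2j+1] × [1, 2]`. Its complement splits into the unbounded outside of the box
`[0, 2k+1] × [0, 3]` and the `k` open squares `(2j+1, 2j+2) × (1, 2)` between consecutive rungs.
These `k + 1` pieces are open, preconnected and pairwise disjoint, hence they are exactly the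
connected components of the complement; with `m = k + 3` rectangles this gives `m - 2` holes.
-/

/-- A nondegenerate closed axis-parallel rectangle in ℝ²:
a set of the form [a, b] × [c, d] with a < b and c < d. -/
def IsRect (S : Set (ℝ × ℝ)) : Prop :=
  ∃ a b c d : ℝ, a < b ∧ c < d ∧ S = Set.Icc a b ×ˢ Set.Icc c d

open Set Function

section Components

variable {ι X : Type*} {U : ι → Set X}

theorem injective_of_pairwise_disjoint_of_nonempty (hne : ∀ i, (U i).Nonempty)
    (hdisj : Pairwise (Disjoint on U)) : Injective U :=
  pairwise_ne_iff_injective.1 fun _ _ hij => (hdisj hij).ne (hne _).ne_empty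

variable [TopologicalSpace X]

theorem connectedComponentIn_iUnion_eq (hopen : ∀ i, IsOpen (U i))
    (hconn : ∀ i, IsPreconnected (U i)) (hdisj : Pairwise (Disjoint on U)) {i : ι} {x : X}
    (hx : x ∈ U i) : connectedComponentIn (⋃ j, U j) x = U i := by
  refine subset_antisymm ?_ ((hconn i).subset_connectedComponentIn hx (subset_iUnion U i))
  have hsplit : ⋃ j, U j ⊆ U i ∪ ⋃ (j) (_ : j ≠ i), U j := by
    refine iUnion_subset fun j => ?_
    by_cases hji : j = i
    · exact hji ▸ subset_union_left
    · exact (subset_biUnion_of_mem (u := U) hji).trans subset_union_right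
  exact isPreconnected_connectedComponentIn.subset_left_of_subset_union (hopen i)
    (isOpen_biUnion fun j _ => hopen j)
    (disjoint_iUnion₂_right.2 fun _ hj => hdisj (Ne.symm hj))
    ((connectedComponentIn_subset _ _).trans hsplit)
    ⟨x, mem_connectedComponentIn (mem_iUnion_of_mem i hx), hx⟩

theorem setOf_connectedComponentIn_iUnion_eq_range (hopen : ∀ i, IsOpen (U i))
    (hconn : ∀ i, IsPreconnected (U i)) (hne : ∀ i, (U i).Nonempty)
    (hdisj : Pairwise (Disjoint on U)) :
    {H | ∃ x ∈ ⋃ i, U i, H = connectedComponentIn (⋃ i, U i) x} = range U := by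
  ext H
  constructor
  · rintro ⟨x, hx, rfl⟩
    obtain ⟨i, hxi⟩ := mem_iUnion.1 hx
    exact ⟨i, (connectedComponentIn_iUnion_eq hopen hconn hdisj hxi).symm⟩
  · rintro ⟨i, rfl⟩
    obtain ⟨x, hx⟩ := hne i
    exact ⟨x, mem_iUnion_of_mem i hx,
      (connectedComponentIn_iUnion_eq hopen hconn hdisj hx).symm⟩

end Components

theorem isPreconnected_compl_Icc_prod_Icc (a b c d : ℝ) :
    IsPreconnected (Icc a b ×ˢ Icc c d)ᶜ := by
  have hcompl : (Icc a b ×ˢ Icc c d)ᶜ =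
      ((Iio a ×ˢ univ ∪ univ ×ˢ Iio c) ∪ univ ×ˢ Ioi d) ∪ Ioi b ×ˢ univ := by
    ext ⟨x, y⟩
    simp only [mem_compl_iff, mem_prod, mem_Icc, mem_union, mem_Iio, mem_Ioi, mem_univ]
    grind
  have hlower : IsPreconnected (Iio a ×ˢ univ ∪ univ ×ˢ Iio c) :=
    ((convex_Iio a).prod convex_univ).isPreconnected.union (a - 1, c - 1)
      ⟨by simp, trivial⟩ ⟨trivial, by simp⟩ (convex_univ.prod (convex_Iio c)).isPreconnected
  have hupper : IsPreconnected ((Iio a ×ˢ univ ∪ univ ×ˢ Iio c) ∪ univ ×ˢ Ioi d) :=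
    hlower.union (a - 1, d + 1) (Or.inl ⟨by simp, trivial⟩) ⟨trivial, by simp⟩
      (convex_univ.prod (convex_Ioi d)).isPreconnected
  rw [hcompl]
  exact hupper.union (b + 1, c - 1) (Or.inl (Or.inr ⟨trivial, by simp⟩)) ⟨by simp, trivial⟩
    ((convex_Ioi b).prod convex_univ).isPreconnected

theorem disjoint_Icc_Ioo_of_le {α : Type*} [LinearOrder α] {a b c d : α} (h : b ≤ c) :
    Disjoint (Icc a b) (Ioo c d) :=
  (Iic_disjoint_Ioi h).mono Icc_subset_Iic_self Ioo_subset_Ioi_self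

theorem disjoint_Icc_Ioo_of_ge {α : Type*} [LinearOrder α] {a b c d : α} (h : d ≤ a) :
    Disjoint (Icc a b) (Ioo c d) :=
  (Iio_disjoint_Ici h).symm.mono Icc_subset_Ici_self Ioo_subset_Iio_self

theorem exists_mem_Icc_or_mem_Ioo_of_mem_Icc {k : ℕ} {x : ℝ}
    (hx : x ∈ Icc 0 (2 * (k : ℝ) + 1)) :
    (∃ j ≤ k, x ∈ Icc (2 * (j : ℝ)) (2 * j + 1)) ∨
      ∃ j < k, x ∈ Ioo (2 * (j : ℝ) + 1) (2 * j + 2) := by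
  obtain ⟨hx0, hxk⟩ := hx
  set j := ⌊x / 2⌋₊
  have hjx : 2 * (j : ℝ) ≤ x := by linarith [Nat.floor_le (by linarith : (0 : ℝ) ≤ x / 2)]
  have hxj : x < 2 * (j : ℝ) + 2 := by linarith [Nat.lt_floor_add_one (x / 2)]
  rcases le_or_gt x (2 * j + 1) with hxj' | hxj'
  · refine Or.inl ⟨j, ?_, hjx, hxj'⟩
    have : j < k + 1 := by exact_mod_cast (by linarith : (j : ℝ) < k + 1)
    omega
  · refine Or.inr ⟨j, ?_, hxj', hxj⟩
    exact_mod_cast (by linarith : (j : ℝ) < k)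

section Ladder

variable {k : ℕ}

def ladderRect (k : ℕ) : ℕ → Set (ℝ × ℝ)
  | 0 => Icc 0 (2 * (k : ℝ) + 1) ×ˢ Icc 0 1
  | 1 => Icc 0 (2 * (k : ℝ) + 1) ×ˢ Icc 2 3
  | j + 2 => Icc (2 * (j : ℝ)) (2 * j + 1) ×ˢ Icc 1 2

def ladderBox (k : ℕ) : Set (ℝ × ℝ) := Icc 0 (2 * (k : ℝ) + 1) ×ˢ Icc 0 3

def ladderCell (k : ℕ) : ℕ → Set (ℝ × ℝ)
  | 0 => (ladderBox k)ᶜ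
  | j + 1 => Ioo (2 * (j : ℝ) + 1) (2 * j + 2) ×ˢ Ioo 1 2

theorem isRect_ladderRect (k i : ℕ) : IsRect (ladderRect k i) := by
  match i with
  | 0 => exact ⟨_, _, _, _, by positivity, one_pos, rfl⟩
  | 1 => exact ⟨_, _, _, _, by positivity, by norm_num, rfl⟩
  | j + 2 => exact ⟨_, _, _, _, by linarith, one_lt_two, rfl⟩

theorem disjoint_interior_ladderRect {i j : ℕ} (hij : i ≠ j) :
    Disjoint (interior (ladderRect k i)) (interior (ladderRect k j)) := by
  wlog hlt : i < j generalizing i j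
  · exact (this hij.symm (by omega)).symm
  obtain _ | _ | i := i <;> obtain _ | _ | j := j <;> try omega
  all_goals
    simp only [ladderRect, interior_prod_eq, interior_Icc]
    refine disjoint_prod.2 ?_
  · exact Or.inr ((disjoint_Icc_Ioo_of_le (by norm_num)).mono_left Ioo_subset_Icc_self)
  · exact Or.inr ((disjoint_Icc_Ioo_of_le le_rfl).mono_left Ioo_subset_Icc_self)
  · exact Or.inr ((disjoint_Icc_Ioo_of_ge le_rfl).mono_left Ioo_subset_Icc_self)
  · have : (i : ℝ) + 1 ≤ j := by exact_mod_cast (by omega : i + 1 ≤ j)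
    exact Or.inl ((disjoint_Icc_Ioo_of_le (by linarith)).mono_left Ioo_subset_Icc_self)

theorem ladderRect_subset_ladderBox {i : ℕ} (hi : i < k + 3) :
    ladderRect k i ⊆ ladderBox k := by
  match i with
  | 0 => exact prod_mono subset_rfl (Icc_subset_Icc_right (by norm_num))
  | 1 => exact prod_mono subset_rfl (Icc_subset_Icc_left (by norm_num))
  | j + 2 =>
    have : (j : ℝ) ≤ k := by exact_mod_cast (by omega : j ≤ k)
    exact prod_mono (Icc_subset_Icc (by positivity) (by linarith))
      (Icc_subset_Icc (by norm_num) (by norm_num))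

theorem disjoint_ladderRect_ladderCell {i : ℕ} (hi : i < k + 3) (j : ℕ) :
    Disjoint (ladderRect k i) (ladderCell k j) := by
  match i, j with
  | i, 0 => exact disjoint_compl_right_iff_subset.2 (ladderRect_subset_ladderBox hi)
  | 0, j + 1 => exact disjoint_prod.2 (Or.inr (disjoint_Icc_Ioo_of_le le_rfl))
  | 1, j + 1 => exact disjoint_prod.2 (Or.inr (disjoint_Icc_Ioo_of_ge le_rfl))
  | i + 2, j + 1 =>
    refine disjoint_prod.2 (Or.inl ?_)
    rcases le_or_gt i j with hij | hij
    · have : (i : ℝ) ≤ j := by exact_mod_cast hij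
      exact disjoint_Icc_Ioo_of_le (by linarith)
    · have : (j : ℝ) + 1 ≤ i := by exact_mod_cast hij
      exact disjoint_Icc_Ioo_of_ge (by linarith)

theorem exists_mem_ladderRect_or_mem_ladderCell (k : ℕ) (p : ℝ × ℝ) :
    (∃ i < k + 3, p ∈ ladderRect k i) ∨ ∃ j < k + 1, p ∈ ladderCell k j := by
  obtain ⟨x, y⟩ := p
  by_cases hbox : (x, y) ∈ ladderBox k
  swap
  · exact Or.inr ⟨0, k.succ_pos, hbox⟩
  obtain ⟨hx, hy0, hy3⟩ := hbox
  rcases le_or_gt y 1 with hy1 | hy1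
  · exact Or.inl ⟨0, by omega, hx, hy0, hy1⟩
  rcases le_or_gt 2 y with hy2 | hy2
  · exact Or.inl ⟨1, by omega, hx, hy2, hy3⟩
  rcases exists_mem_Icc_or_mem_Ioo_of_mem_Icc hx with ⟨j, hj, hxj⟩ | ⟨j, hj, hxj⟩
  · exact Or.inl ⟨j + 2, by omega, hxj, hy1.le, hy2.le⟩
  · exact Or.inr ⟨j + 1, by omega, hxj, hy1, hy2⟩

theorem compl_iUnion_ladderRect (k : ℕ) :
    (⋃ i : Fin (k + 3), ladderRect k i)ᶜ = ⋃ j : Fin (k + 1), ladderCell k j := by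
  refine IsCompl.compl_eq ⟨?_, codisjoint_iff.2 (eq_univ_of_forall fun p => ?_)⟩
  · exact disjoint_iUnion_left.2 fun i => disjoint_iUnion_right.2 fun j =>
      disjoint_ladderRect_ladderCell i.isLt j
  · rcases exists_mem_ladderRect_or_mem_ladderCell k p with ⟨i, hi, hp⟩ | ⟨j, hj, hp⟩
    · exact Or.inl (mem_iUnion_of_mem ⟨i, hi⟩ hp)
    · exact Or.inr (mem_iUnion_of_mem ⟨j, hj⟩ hp)

theorem isOpen_ladderCell (k j : ℕ) : IsOpen (ladderCell k j) := by
  match j with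
  | 0 => exact (isClosed_Icc.prod isClosed_Icc : IsClosed (ladderBox k)).isOpen_compl
  | j + 1 => exact isOpen_Ioo.prod isOpen_Ioo

theorem isPreconnected_ladderCell (k j : ℕ) : IsPreconnected (ladderCell k j) := by
  match j with
  | 0 => exact isPreconnected_compl_Icc_prod_Icc _ _ _ _
  | j + 1 => exact ((convex_Ioo _ _).prod (convex_Ioo _ _)).isPreconnected

theorem ladderCell_nonempty (k j : ℕ) : (ladderCell k j).Nonempty := by
  match j with
  | 0 => exact ⟨(-1, -1), fun h => by linarith [h.1.1]⟩
  | j + 1 => exact ⟨(2 * j + 3 / 2, 3 / 2), by constructor <;> constructor <;> norm_num⟩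

theorem disjoint_ladderCell {i j : ℕ} (hi : i < k + 1) (hj : j < k + 1) (hij : i ≠ j) :
    Disjoint (ladderCell k i) (ladderCell k j) := by
  wlog hlt : i < j generalizing i j
  · exact (this hj hi hij.symm (by omega)).symm
  obtain ⟨j, rfl⟩ : ∃ j', j = j' + 1 := ⟨j - 1, by omega⟩
  have hjk : (j : ℝ) + 1 ≤ k := by exact_mod_cast (by omega : j + 1 ≤ k)
  match i with
  | 0 =>
    refine disjoint_compl_left_iff_subset.2 (prod_mono ?_ (Ioo_subset_Icc_self.trans ?_))
    · exact Ioo_subset_Icc_self.trans (Icc_subset_Icc (by positivity) (by linarith))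
    · exact Icc_subset_Icc (by norm_num) (by norm_num)
  | i + 1 =>
    have : (i : ℝ) + 1 ≤ j := by exact_mod_cast (by omega : i + 1 ≤ j)
    exact disjoint_prod.2
      (Or.inl ((disjoint_Icc_Ioo_of_le (by linarith)).mono_left Ioo_subset_Icc_self))

end Ladder

theorem rect_holes_lower_bound (m : ℕ) (hm : 3 ≤ m) :
    ∃ Z : Fin m → Set (ℝ × ℝ),
      (∀ i, IsRect (Z i)) ∧
      (∀ i j, i ≠ j → Disjoint (interior (Z i)) (interior (Z j))) ∧
      ({H : Set (ℝ × ℝ) | ∃ x ∈ (⋃ i, Z i)ᶜ,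
          H = connectedComponentIn (⋃ i, Z i)ᶜ x}).Finite ∧
      ({H : Set (ℝ × ℝ) | ∃ x ∈ (⋃ i, Z i)ᶜ,
          H = connectedComponentIn (⋃ i, Z i)ᶜ x}).ncard = m - 2 := by
  obtain ⟨k, rfl⟩ := Nat.exists_eq_add_of_le' hm
  set cell : Fin (k + 1) → Set (ℝ × ℝ) := fun j => ladderCell k j
  have hne : ∀ j, (cell j).Nonempty := fun j => ladderCell_nonempty k j
  have hdisj : Pairwise (Disjoint on cell) := fun i j hij =>
    disjoint_ladderCell i.isLt j.isLt (Fin.val_ne_of_ne hij)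
  have hholes : {H | ∃ x ∈ (⋃ i : Fin (k + 3), ladderRect k i)ᶜ,
      H = connectedComponentIn (⋃ i : Fin (k + 3), ladderRect k i)ᶜ x} = range cell := by
    rw [compl_iUnion_ladderRect]
    exact setOf_connectedComponentIn_iUnion_eq_range (fun j => isOpen_ladderCell k j)
      (fun j => isPreconnected_ladderCell k j) hne hdisj
  refine ⟨fun i => ladderRect k i, fun i => isRect_ladderRect k i,
    fun i j hij => disjoint_interior_ladderRect (Fin.val_ne_of_ne hij), ?_, ?_⟩
  · rw [hholes]
    exact finite_range cell
  · rw [hholes, ncard_range_of_injective (injective_of_pairwise_disjoint_of_nonempty hne hdisj),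
      Nat.card_fin]
    omega
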